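/- Let Q = Q(r,2,0) with r ≥ 1. Then χ'_s(Q) = n_1(Q) + 1 = r + 3. -/

import Mathlib

open SimpleGraph

variable {V : Type*}

/-- A vertex distinguishing proper edge `k`-coloring (vdec): a proper edge coloring
(edges sharing an endpoint get different colors) such that distinct vertices have
distinct sets of colors on their incident edges. -/
def IsVDEC (G : SimpleGraph V) (k : ℕ) (c : Sym2 V → Fin k) : Prop :=
  (∀ ⦃u v w : V⦄, G.Adj u v → G.Adj u w → v ≠ w → c s(u, v) ≠ c s(u, w)) ∧
  (∀ u v : V, u ≠ v →
    {i : Fin k | ∃ w, G.Adj u w ∧ c s(u, w) = i} ≠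
    {i : Fin k | ∃ w, G.Adj v w ∧ c s(v, w) = i})

/-- `χ'ₛ(G)`: the minimum number of colors in a vdec of `G`. -/
noncomputable def vdecNum (G : SimpleGraph V) : ℕ :=
  sInf {k : ℕ | ∃ c : Sym2 V → Fin k, IsVDEC G k c}

/-- `n_d(G)`: the number of vertices of degree `d` in `G`. -/
noncomputable def numDeg (G : SimpleGraph V) (d : ℕ) : ℕ :=
  Nat.card {v : V // Nat.card (G.neighborSet v) = d}

/-- Vertex type of the tree `Q(r,m,n)`: the center `w₀`, the leaves `w₁,…,w_r`,
the pairs `sᵢ, s'ᵢ` (encoded as `(i,0)` and `(i,1)`), the vertices `t₁,…,tₙ`,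
and the leaves `t'_{i,j}` for `j < rv i`. -/
abbrev QVert (r m n : ℕ) (rv : Fin n → ℕ) : Type :=
  Unit ⊕ Fin r ⊕ (Fin m × Fin 2) ⊕ (Fin n ⊕ Σ i : Fin n, Fin (rv i))

/-- The tree `Q(r,m,n)` of diameter four: the center `w₀` is adjacent to the `r` leaves
`wᵢ`, to the `m` vertices `sᵢ` (each `sᵢ` having one further leaf neighbor `s'ᵢ`),
and to the `n` vertices `tᵢ`, where `tᵢ` has `rv i` further neighbors, all leaves. -/
def QGraph (r m n : ℕ) (rv : Fin n → ℕ) : SimpleGraph (QVert r m n rv) :=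
  SimpleGraph.fromRel (fun a b =>
    (a = Sum.inl () ∧
      ((∃ i, b = Sum.inr (Sum.inl i)) ∨
       (∃ i, b = Sum.inr (Sum.inr (Sum.inl (i, (0 : Fin 2))))) ∨
       (∃ i, b = Sum.inr (Sum.inr (Sum.inr (Sum.inl i)))))) ∨
    (∃ i : Fin m, a = Sum.inr (Sum.inr (Sum.inl (i, (0 : Fin 2)))) ∧
       b = Sum.inr (Sum.inr (Sum.inl (i, (1 : Fin 2))))) ∨
    (∃ (i : Fin n) (j : Fin (rv i)), a = Sum.inr (Sum.inr (Sum.inr (Sum.inl i))) ∧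
       b = Sum.inr (Sum.inr (Sum.inr (Sum.inr ⟨i, j⟩)))))

/-!
Label the vertices of `Q(r,2,0)` by `w₀ ↦ 0`, `wᵢ ↦ i`, `s₀ ↦ r + 1`, `s₁ ↦ r`, `s'₀ ↦ r + 2`,
`s'₁ ↦ r + 1` and colour each edge by the larger label of its ends. Every vertex then sees an
interval of colours whose length is its degree, and distinct vertices see distinct intervals,
so `r + 3` colours suffice.

Conversely, the `r + 2` leaves need distinct colours. With only `r + 2` colours the centre, of
degree `r + 2`, sees all of them; the pendant edge `sᵢs'ᵢ` can reuse neither a colour of `w₀wⱼ`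
(leaves are distinguished) nor that of `w₀sᵢ` (properness), so it has the colour of `w₀sⱼ`,
`j ≠ i`, and then `s₀` and `s₁` see the same two colours.
-/

section IncidentColors

variable {G : SimpleGraph V} {k : ℕ} {c : Sym2 V → Fin k}

def incidentColors (G : SimpleGraph V) (c : Sym2 V → Fin k) (u : V) : Set (Fin k) :=
  (fun w => c s(u, w)) '' G.neighborSet u

lemma isVDEC_iff : IsVDEC G k c ↔
    (∀ u, Set.InjOn (fun w => c s(u, w)) (G.neighborSet u)) ∧
      Function.Injective (incidentColors G c) := by
  refine and_congr ⟨fun h u v hv w hw hvw => ?_, fun h u v w hv hw => mt (h u hv hw)⟩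
    ⟨fun h u v huv => ?_, fun h u v => mt (@h u v)⟩
  · by_contra hne
    exact h hv hw hne hvw
  · by_contra hne
    exact h u v (by rintro rfl; exact hne rfl) huv

lemma IsVDEC.injOn (hc : IsVDEC G k c) (u : V) :
    Set.InjOn (fun w => c s(u, w)) (G.neighborSet u) :=
  (isVDEC_iff.mp hc).1 u

lemma IsVDEC.injective (hc : IsVDEC G k c) : Function.Injective (incidentColors G c) :=
  (isVDEC_iff.mp hc).2

lemma IsVDEC.ncard_incidentColors (hc : IsVDEC G k c) (u : V) :
    (incidentColors G c u).ncard = (G.neighborSet u).ncard :=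
  (hc.injOn u).ncard_image

lemma incidentColors_of_neighborSet_eq_singleton {u a : V} (h : G.neighborSet u = {a}) :
    incidentColors G c u = {c s(u, a)} := by
  rw [incidentColors, h, Set.image_singleton]

lemma IsVDEC.numDeg_one_le (hc : IsVDEC G k c) : numDeg G 1 ≤ k := by
  have hleaf (v : {v // Nat.card (G.neighborSet v) = 1}) : ∃ a, incidentColors G c v = {a} := by
    obtain ⟨a, ha⟩ := Set.ncard_eq_one.mp (Nat.card_coe_set_eq _ ▸ v.2)
    exact ⟨_, incidentColors_of_neighborSet_eq_singleton ha⟩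
  choose f hf using hleaf
  have hf_inj : Function.Injective f :=
    fun u v huv => Subtype.ext (hc.injective (by rw [hf, hf, huv]))
  exact (Nat.card_le_card_of_injective f hf_inj).trans_eq (Nat.card_fin k)

lemma IsVDEC.incidentColors_eq_univ (hc : IsVDEC G k c) {u : V}
    (hu : (G.neighborSet u).ncard = k) : incidentColors G c u = Set.univ :=
  Set.eq_of_subset_of_ncard_le (Set.subset_univ _) (by simp [hc.ncard_incidentColors, hu])

end IncidentColors

namespace QGraph

variable {r m n : ℕ} {rv : Fin n → ℕ}

abbrev w₀ : QVert r m n rv := Sum.inl ()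

abbrev w (i : Fin r) : QVert r m n rv := Sum.inr (Sum.inl i)

abbrev s (i : Fin m) : QVert r m n rv := Sum.inr (Sum.inr (Sum.inl (i, 0)))

abbrev s' (i : Fin m) : QVert r m n rv := Sum.inr (Sum.inr (Sum.inl (i, 1)))

@[elab_as_elim]
lemma vertex_ind {rv : Fin 0 → ℕ} {motive : QVert r m 0 rv → Prop} (center : motive w₀)
    (leaf : ∀ i, motive (w i)) (mid : ∀ i, motive (s i)) (tip : ∀ i, motive (s' i))
    (v : QVert r m 0 rv) : motive v := by
  rcases v with ⟨⟨⟩⟩ | i | ⟨i, j⟩ | v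
  · exact center
  · exact leaf i
  · rcases Fin.exists_fin_two.mp ⟨j, rfl⟩ with rfl | rfl
    · exact mid i
    · exact tip i
  · rcases v with i | ⟨i, _⟩ <;> exact i.elim0

lemma neighborSet_w (i : Fin r) : (QGraph r m n rv).neighborSet (w i) = {w₀} := by
  ext x
  rcases x with _ | _ | _ | _ <;> simp [QGraph]

lemma neighborSet_s (i : Fin m) : (QGraph r m n rv).neighborSet (s i) = {w₀, s' i} := by
  ext x
  rcases x with _ | _ | ⟨j, l⟩ | _ <;> simp [QGraph]
  fin_cases l <;> simp [eq_comm]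

lemma neighborSet_s' (i : Fin m) : (QGraph r m n rv).neighborSet (s' i) = {s i} := by
  ext x
  rcases x with _ | _ | ⟨j, l⟩ | _ <;> simp [QGraph]
  fin_cases l <;> simp [eq_comm]

lemma neighborSet_w₀ {rv : Fin 0 → ℕ} :
    (QGraph r m 0 rv).neighborSet w₀ = Set.range (Sum.elim w s) := by
  ext x
  induction x using vertex_ind <;> simp [QGraph]

lemma ncard_neighborSet_w (i : Fin r) : ((QGraph r m n rv).neighborSet (w i)).ncard = 1 := by
  rw [neighborSet_w, Set.ncard_singleton]

lemma ncard_neighborSet_s (i : Fin m) : ((QGraph r m n rv).neighborSet (s i)).ncard = 2 := by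
  rw [neighborSet_s, Set.ncard_pair (by simp)]

lemma ncard_neighborSet_s' (i : Fin m) : ((QGraph r m n rv).neighborSet (s' i)).ncard = 1 := by
  rw [neighborSet_s', Set.ncard_singleton]

lemma sumElim_w_s_injective :
    Function.Injective (Sum.elim w s : Fin r ⊕ Fin m → QVert r m n rv) := by
  rintro (i | i) (j | j) h <;> simp_all

lemma sumElim_w_s'_injective :
    Function.Injective (Sum.elim w s' : Fin r ⊕ Fin m → QVert r m n rv) := by
  rintro (i | i) (j | j) h <;> simp_all

lemma ncard_neighborSet_w₀ {rv : Fin 0 → ℕ} :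
    ((QGraph r m 0 rv).neighborSet w₀).ncard = r + m := by
  rw [neighborSet_w₀, ← Set.image_univ, Set.ncard_image_of_injective _ sumElim_w_s_injective]
  simp

lemma ncard_neighborSet_eq_one_iff {rv : Fin 0 → ℕ} (h : r + m ≠ 1) (v : QVert r m 0 rv) :
    ((QGraph r m 0 rv).neighborSet v).ncard = 1 ↔ v ∈ Set.range (Sum.elim w s') := by
  induction v using vertex_ind <;>
    simp [ncard_neighborSet_w₀, ncard_neighborSet_w, ncard_neighborSet_s, ncard_neighborSet_s', h]

lemma numDeg_one {rv : Fin 0 → ℕ} (h : r + m ≠ 1) : numDeg (QGraph r m 0 rv) 1 = r + m := by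
  have hleaves :
      {v | Nat.card ((QGraph r m 0 rv).neighborSet v) = 1} = Set.range (Sum.elim w s') := by
    ext v
    rw [Set.mem_ofPred_eq, Nat.card_coe_set_eq, ncard_neighborSet_eq_one_iff h]
  rw [numDeg, ← Set.coe_ofPred, hleaves, Nat.card_range_of_injective sumElim_w_s'_injective]
  simp

end QGraph

namespace QGraph

variable {r k : ℕ} {c : Sym2 (QVert r 2 0 Fin.elim0) → Fin k}

lemma color_s_s'_eq (hc : IsVDEC (QGraph r 2 0 Fin.elim0) k c)
    (hcover : incidentColors (QGraph r 2 0 Fin.elim0) c w₀ = Set.univ) {i j : Fin 2}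
    (hij : i ≠ j) : c s(s i, s' i) = c s(w₀, s j) := by
  have hmem : c s(s i, s' i) ∈ incidentColors (QGraph r 2 0 Fin.elim0) c w₀ := by
    simp [hcover]
  rw [incidentColors, neighborSet_w₀] at hmem
  obtain ⟨_, ⟨l | l, rfl⟩, hl⟩ := hmem <;> dsimp only [Sum.elim_inl, Sum.elim_inr] at hl
  · have hsame : incidentColors (QGraph r 2 0 Fin.elim0) c (w l) =
        incidentColors (QGraph r 2 0 Fin.elim0) c (s' i) := by
      rw [incidentColors_of_neighborSet_eq_singleton (neighborSet_w l),
        incidentColors_of_neighborSet_eq_singleton (neighborSet_s' i), Sym2.eq_swap, hl,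
        Sym2.eq_swap]
    simpa using hc.injective hsame
  · obtain rfl | rfl : l = i ∨ l = j := by
      simp only [Fin.ext_iff] at hij ⊢
      omega
    · have hproper : w₀ = s' l :=
        hc.injOn (s l) (by simp [neighborSet_s]) (by simp [neighborSet_s]) (by
          show c s(s l, w₀) = c s(s l, s' l)
          rw [Sym2.eq_swap, hl])
      simp at hproper
    · exact hl.symm

theorem add_three_le_of_isVDEC (hc : IsVDEC (QGraph r 2 0 Fin.elim0) k c) : r + 3 ≤ k := by
  have hleaves : r + 2 ≤ k := numDeg_one (m := 2) (by omega) ▸ hc.numDeg_one_le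
  by_contra! hk
  have hcover : incidentColors _ c w₀ = Set.univ :=
    hc.incidentColors_eq_univ (by rw [ncard_neighborSet_w₀]; omega)
  apply hc.injective.ne (show (s 0 : QVert r 2 0 Fin.elim0) ≠ s 1 by simp)
  rw [incidentColors, incidentColors, neighborSet_s, neighborSet_s, Set.image_pair,
    Set.image_pair, color_s_s'_eq hc hcover zero_ne_one, color_s_s'_eq hc hcover one_ne_zero,
    Sym2.eq_swap (a := s 0), Sym2.eq_swap (a := s 1), Set.pair_comm]

end QGraph

namespace QGraph

variable {r : ℕ}

def label (r : ℕ) : QVert r 2 0 Fin.elim0 → Fin (r + 3)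
  | Sum.inl () => 0
  | Sum.inr (Sum.inl i) => Fin.castLE (by omega) i
  | Sum.inr (Sum.inr (Sum.inl (i, j))) => ⟨r + 1 + j - i, by omega⟩
  | Sum.inr (Sum.inr (Sum.inr (Sum.inl i))) => i.elim0
  | Sum.inr (Sum.inr (Sum.inr (Sum.inr ⟨i, _⟩))) => i.elim0

def maxColoring (r : ℕ) (e : Sym2 (QVert r 2 0 Fin.elim0)) : Fin (r + 3) :=
  (e.map (label r)).sup

def colorInterval (r : ℕ) : QVert r 2 0 Fin.elim0 → ℕ × ℕ
  | Sum.inl () => (0, r + 1)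
  | Sum.inr (Sum.inl i) => (i, i)
  | Sum.inr (Sum.inr (Sum.inl (i, j))) => (r + 1 + j - i, r + 2 - i)
  | Sum.inr (Sum.inr (Sum.inr (Sum.inl i))) => i.elim0
  | Sum.inr (Sum.inr (Sum.inr (Sum.inr ⟨i, _⟩))) => i.elim0

lemma val_maxColoring (u v : QVert r 2 0 Fin.elim0) :
    (maxColoring r s(u, v) : ℕ) = max (label r u : ℕ) (label r v) := rfl

lemma val_image_incidentColors_maxColoring (v : QVert r 2 0 Fin.elim0) :
    Fin.val '' incidentColors (QGraph r 2 0 Fin.elim0) (maxColoring r) v =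
      Set.Icc (colorInterval r v).1 (colorInterval r v).2 := by
  ext x
  induction v using vertex_ind with
  | center =>
    rw [incidentColors, neighborSet_w₀, Set.image_image, ← Set.range_comp]
    simp only [Set.mem_range, Sum.exists, Function.comp_apply, Sum.elim_inl, Sum.elim_inr,
      val_maxColoring, label, colorInterval, Set.mem_Icc, Fin.exists_fin_two, Fin.val_castLE,
      Fin.val_zero, Fin.val_one, Nat.zero_max]
    simp only [Fin.exists_iff, exists_prop, exists_eq_right]
    omega
  | leaf i => simp [incidentColors, neighborSet_w, maxColoring, label, colorInterval]
  | mid i =>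
    simp only [incidentColors, neighborSet_s, Set.image_insert_eq, Set.image_singleton,
      Set.mem_insert_iff, Set.mem_singleton_iff, val_maxColoring, label, colorInterval, Set.mem_Icc,
      Fin.val_zero, Fin.val_one]
    omega
  | tip i =>
    simp only [incidentColors, neighborSet_s', Set.image_singleton, Set.mem_singleton_iff,
      val_maxColoring, label, colorInterval, Set.mem_Icc, Fin.val_zero, Fin.val_one]
    omega

lemma colorInterval_fst_le (v : QVert r 2 0 Fin.elim0) :
    (colorInterval r v).1 ≤ (colorInterval r v).2 := by
  induction v using vertex_ind <;> simp only [colorInterval] <;> omega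

lemma colorInterval_injective (hr : 1 ≤ r) : Function.Injective (colorInterval r) := by
  intro u v h
  induction u using vertex_ind <;> induction v using vertex_ind <;>
    simp only [colorInterval, Prod.mk.injEq, Sum.inr.injEq, Sum.inl.injEq, reduceCtorEq,
      Fin.ext_iff, Fin.val_zero, Fin.val_one, and_true] at h ⊢ <;> omega

lemma ncard_neighborSet_eq_colorInterval (v : QVert r 2 0 Fin.elim0) :
    ((QGraph r 2 0 Fin.elim0).neighborSet v).ncard =
      (colorInterval r v).2 + 1 - (colorInterval r v).1 := by
  induction v using vertex_ind <;>
    simp only [ncard_neighborSet_w₀, ncard_neighborSet_w, ncard_neighborSet_s,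
      ncard_neighborSet_s', colorInterval] <;> omega

theorem isVDEC_maxColoring (hr : 1 ≤ r) :
    IsVDEC (QGraph r 2 0 Fin.elim0) (r + 3) (maxColoring r) := by
  refine isVDEC_iff.mpr ⟨fun u => Set.injOn_of_ncard_image_eq ?_, fun u v huv => ?_⟩
  · change (incidentColors _ (maxColoring r) u).ncard = _
    rw [← Set.ncard_image_of_injective _ Fin.val_injective, val_image_incidentColors_maxColoring,
      Set.ncard_Icc_nat, ncard_neighborSet_eq_colorInterval]
  · have hIcc := congrArg (Set.image Fin.val) huv
    rw [val_image_incidentColors_maxColoring, val_image_incidentColors_maxColoring,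
      Set.Icc_eq_Icc_iff (colorInterval_fst_le u)] at hIcc
    exact colorInterval_injective hr (Prod.ext hIcc.1 hIcc.2)

end QGraph

/-- For `Q = Q(r,2,0)` with `r ≥ 1`, `χ'ₛ(Q) = n₁(Q) + 1 = r + 3`. -/
theorem vdecNum_QGraph_r20 (r : ℕ) (hr : 1 ≤ r) :
    vdecNum (QGraph r 2 0 Fin.elim0) = numDeg (QGraph r 2 0 Fin.elim0) 1 + 1 ∧
    numDeg (QGraph r 2 0 Fin.elim0) 1 + 1 = r + 3 := by
  have hleaves : numDeg (QGraph r 2 0 Fin.elim0) 1 = r + 2 := QGraph.numDeg_one (by omega)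
  have hvdec : vdecNum (QGraph r 2 0 Fin.elim0) = r + 3 :=
    IsLeast.csInf_eq ⟨⟨_, QGraph.isVDEC_maxColoring hr⟩,
      fun _ ⟨_, hc⟩ => QGraph.add_three_le_of_isVDEC hc⟩
  omega
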